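/- arXiv:2403.11545 — 6 statements merged into one kernel-verified Lean document; each statement's English description precedes it below -/
import Mathlib

section
/- Let b ≥ 2, and let u be a formal Laurent series in x^{1/q} over a field L of characteristic zero, with valuation α and leading coefficient λ, where M denotes the substitution x ↦ x^b. If λ ≠ 1, then the equation M v = u·v has no nonzero solution v among Puiseux series over L. If λ = 1 and α/(b−1) is an admissible exponent, then there is a unique Puiseux series solution v with valuation α/(b−1) and leading coefficient 1, and the full solution space of M v = u v in Puiseux series over L is the one-dimensional L-span of v. -/
/-- The Mahler operator `x ↦ x^b` on Hahn series with rational exponents: it rescales the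
exponents by `b`. -/
noncomputable def mahlerHahn (L : Type*) [Field L] (b : ℕ) (hb : 0 < b) :
    HahnSeries ℚ L →+* HahnSeries ℚ L :=
  HahnSeries.embDomainRingHom (AddMonoidHom.mulLeft (b : ℚ))
    (fun x y h => by
      have hb' : (b : ℚ) ≠ 0 := by positivity
      simpa [AddMonoidHom.coe_mulLeft] using mul_left_cancel₀ hb' h)
    (fun g g' => by
      have hb' : (0 : ℚ) < b := by positivity
      simpa [AddMonoidHom.coe_mulLeft] using mul_le_mul_iff_of_pos_left hb')

/-- A Hahn series over `ℚ` is a Puiseux series if its support has a common denominator. -/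
def IsPuiseux {L : Type*} [Field L] (f : HahnSeries ℚ L) : Prop :=
  ∃ q : ℕ, 0 < q ∧ ∀ e ∈ f.support, ∃ m : ℤ, e = (m : ℚ) / q

/-!
Comparing valuations and leading coefficients in `M v = u v` gives `b · ord v = ord u + ord v`
and `λ = 1`, so every nonzero solution has valuation `β = α / (b - 1)`. Subtracting from a
solution `w` the multiple of a normalized solution `v` with the same coefficient at `x^β` leaves
a solution without a term at `x^β`, hence zero: the solutions form a line.

For existence, take a common denominator `Q` of `β` and the exponents of `u`, and write
`u = x^α U(x^(1/Q))` with a power series `U`, `U(0) = λ = 1`. Then `v = x^β V(x^(1/Q))` is a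
solution as soon as `V(t^b) = U(t) V(t)`, and this equation determines the coefficients of `V`
recursively from `V(0) = 1`, because `n / b < n` for `n ≥ 1`.
-/

open HahnSeries

section Mahler

variable {L : Type*} [Field L] {b : ℕ} (hb : 0 < b)

theorem coeff_mahlerHahn_natCast_mul (v : HahnSeries ℚ L) (e : ℚ) :
    (mahlerHahn L b hb v).coeff (b * e) = v.coeff e :=
  embDomain_coeff

theorem coeff_mahlerHahn (v : HahnSeries ℚ L) (e : ℚ) :
    (mahlerHahn L b hb v).coeff e = v.coeff (e / b) := by
  have hb' : (b : ℚ) ≠ 0 := by positivity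
  conv_lhs => rw [← mul_div_cancel₀ e hb', coeff_mahlerHahn_natCast_mul]

theorem mahlerHahn_single (e : ℚ) (r : L) :
    mahlerHahn L b hb (single e r) = single (b * e) r :=
  embDomain_single

theorem mahlerHahn_C (r : L) : mahlerHahn L b hb (C r) = C r :=
  embDomainRingHom_C

theorem order_mahlerHahn (v : HahnSeries ℚ L) :
    (mahlerHahn L b hb v).order = b * v.order := by
  obtain rfl | hv := eq_or_ne v 0
  · simp
  have hMv : mahlerHahn L b hb v ≠ 0 := (map_ne_zero _).mpr hv
  refine le_antisymm (order_le_of_coeff_ne_zero ?_) (not_lt.mp fun hlt => ?_)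
  · rwa [coeff_mahlerHahn_natCast_mul, Ne, coeff_order_eq_zero]
  · refine coeff_order_eq_zero.not.mpr hMv ?_
    rw [coeff_mahlerHahn]
    exact coeff_eq_zero_of_lt_order ((div_lt_iff₀' (by positivity)).mpr hlt)

theorem leadingCoeff_mahlerHahn (v : HahnSeries ℚ L) :
    (mahlerHahn L b hb v).leadingCoeff = v.leadingCoeff := by
  rw [leadingCoeff_eq, leadingCoeff_eq, order_mahlerHahn, coeff_mahlerHahn_natCast_mul]

end Mahler

section Solutions

variable {L : Type*} [Field L] {b : ℕ} {u v w : HahnSeries ℚ L}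

theorem leadingCoeff_eq_one_of_mahlerHahn_eq_mul (hb : 0 < b) (hv : v ≠ 0)
    (h : mahlerHahn L b hb v = u * v) : u.leadingCoeff = 1 := by
  have := congrArg leadingCoeff h
  rw [leadingCoeff_mahlerHahn, leadingCoeff_mul] at this
  exact (mul_eq_right₀ (leadingCoeff_ne_zero.mpr hv)).mp this.symm

theorem order_eq_div_of_mahlerHahn_eq_mul (hb : 1 < b) (hv : v ≠ 0)
    (h : mahlerHahn L b (by omega) v = u * v) : v.order = u.order / (b - 1) := by
  have hu : u ≠ 0 := left_ne_zero_of_mul (h ▸ (map_ne_zero _).mpr hv)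
  have := congrArg order h
  rw [order_mahlerHahn, order_mul hu hv] at this
  have hb1 : (b : ℚ) - 1 ≠ 0 := sub_ne_zero.mpr (by exact_mod_cast hb.ne')
  rw [eq_div_iff hb1]
  linarith

theorem coeff_ne_zero_of_mahlerHahn_eq_mul (hb : 1 < b) (hw : w ≠ 0)
    (h : mahlerHahn L b (by omega) w = u * w) : w.coeff (u.order / (b - 1)) ≠ 0 := by
  rw [← order_eq_div_of_mahlerHahn_eq_mul hb hw h]
  exact coeff_order_eq_zero.not.mpr hw

theorem eq_coeff_smul_of_mahlerHahn_eq_mul (hb : 1 < b)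
    (hv : mahlerHahn L b (by omega) v = u * v) (hv1 : v.coeff (u.order / (b - 1)) = 1)
    (hw : mahlerHahn L b (by omega) w = u * w) : w = w.coeff (u.order / (b - 1)) • v := by
  set c := w.coeff (u.order / (b - 1))
  by_contra hne
  -- `w - c • v` solves the same equation but vanishes at the only possible valuation
  refine coeff_ne_zero_of_mahlerHahn_eq_mul (u := u) hb (sub_ne_zero.mpr hne) ?_ ?_
  · rw [← C_mul_eq_smul, map_sub, map_mul, mahlerHahn_C, hv, hw]
    ring
  · rw [coeff_sub, coeff_smul, hv1, smul_eq_mul, mul_one, sub_self]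

end Solutions

namespace PowerSeries

variable {R : Type*} [CommRing R] {b : ℕ}

/-- Coefficients of the solution `V` of `V(X^b) = U * V` with `V(0) = 1`, read off from
`coeff (n + 1)` of that equation. -/
noncomputable def mahlerSolutionCoeff (hb : 1 < b) (U : R⟦X⟧) : ℕ → R
  | 0 => 1
  | n + 1 => (if b ∣ n + 1 then mahlerSolutionCoeff hb U ((n + 1) / b) else 0) -
      ∑ k : Fin (n + 1), mahlerSolutionCoeff hb U k * coeff (n + 1 - k) U
termination_by n => n
decreasing_by
  · exact Nat.div_lt_self n.succ_pos hb
  · exact k.isLt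

theorem mahlerSolutionCoeff_succ (hb : 1 < b) (U : R⟦X⟧) (n : ℕ) :
    mahlerSolutionCoeff hb U (n + 1) =
      (if b ∣ n + 1 then mahlerSolutionCoeff hb U ((n + 1) / b) else 0) -
        ∑ k ∈ Finset.range (n + 1), mahlerSolutionCoeff hb U k * coeff (n + 1 - k) U := by
  rw [mahlerSolutionCoeff, ← Fin.sum_univ_eq_sum_range]

theorem exists_expand_eq_mul (hb : 1 < b) {U : R⟦X⟧} (hU : constantCoeff U = 1) :
    ∃ V : R⟦X⟧, constantCoeff V = 1 ∧ expand b (by omega) V = U * V := by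
  refine ⟨mk (mahlerSolutionCoeff hb U), by simp [mahlerSolutionCoeff], ?_⟩
  ext (_ | n)
  · simp [hU, mahlerSolutionCoeff]
  · rw [coeff_expand, mul_comm, coeff_mul, Finset.Nat.sum_antidiagonal_eq_sum_range_succ
      (fun i j => coeff i _ * coeff j U), Finset.sum_range_succ]
    simp only [coeff_mk, mahlerSolutionCoeff_succ, Nat.sub_self, coeff_zero_eq_constantCoeff, hU]
    ring

end PowerSeries

section Root

variable {R : Type*} [Semiring R] {Q : ℕ} (hQ : 0 < Q)

/-- `f(t) ↦ f(x^(1/Q))`. -/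
noncomputable def ofPowerSeriesRoot : PowerSeries R →+* HahnSeries ℚ R :=
  (embDomainRingHom (AddMonoidHom.mulLeft (Q : ℚ)⁻¹) (mul_right_injective₀ (by positivity))
    fun _ _ => mul_le_mul_iff_of_pos_left (by positivity)).comp (ofPowerSeries ℚ R)

theorem coeff_ofPowerSeriesRoot_natCast_div (f : PowerSeries R) (n : ℕ) :
    (ofPowerSeriesRoot hQ f).coeff (n / Q) = PowerSeries.coeff n f := by
  rw [div_eq_inv_mul]
  exact embDomain_coeff.trans (ofPowerSeries_apply_coeff f n)

theorem coeff_ofPowerSeriesRoot_eq_zero (f : PowerSeries R) {e : ℚ}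
    (he : ∀ n : ℕ, e ≠ n / Q) : (ofPowerSeriesRoot hQ f).coeff e = 0 := by
  have hQ' : (Q : ℚ) ≠ 0 := by positivity
  rw [← inv_mul_cancel_left₀ hQ' e]
  refine embDomain_coeff.trans (embDomain_of_notMem_range ?_)
  rintro ⟨n, hn⟩
  exact he n (by rw [eq_div_iff hQ', mul_comm, ← hn]; rfl)

theorem eq_single_mul_ofPowerSeriesRoot {x : HahnSeries ℚ R} {a : ℚ}
    (hx : ∀ e ∈ x.support, ∃ n : ℕ, e = a + n / Q) :
    x = single a 1 * ofPowerSeriesRoot hQ (PowerSeries.mk fun n => x.coeff (a + n / Q)) := by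
  ext e
  rw [coeff_single_mul, one_mul]
  by_cases he : ∃ n : ℕ, e - a = n / Q
  · obtain ⟨n, hn⟩ := he
    rw [hn, coeff_ofPowerSeriesRoot_natCast_div, PowerSeries.coeff_mk, ← hn, add_sub_cancel]
  · push Not at he
    rw [coeff_ofPowerSeriesRoot_eq_zero hQ _ he]
    by_contra hne
    obtain ⟨n, hn⟩ := hx e hne
    exact he n (by rw [hn, add_sub_cancel_left])

end Root

section RootField

variable {L : Type*} [Field L] {Q : ℕ} (hQ : 0 < Q)

theorem isPuiseux_single_mul_ofPowerSeriesRoot (m : ℤ) (f : PowerSeries L) :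
    IsPuiseux (single ((m : ℚ) / Q) 1 * ofPowerSeriesRoot hQ f) := by
  refine ⟨Q, hQ, fun e he => ?_⟩
  rw [mem_support, coeff_single_mul, one_mul] at he
  obtain ⟨n, hn⟩ : ∃ n : ℕ, e - m / Q = n / Q := by
    by_contra! h
    exact he (coeff_ofPowerSeriesRoot_eq_zero hQ f h)
  exact ⟨m + n, by rw [Int.cast_add, Int.cast_natCast, add_div, ← hn, add_sub_cancel]⟩

theorem mahlerHahn_ofPowerSeriesRoot {b : ℕ} (hb : 0 < b) (f : PowerSeries L) :
    mahlerHahn L b hb (ofPowerSeriesRoot hQ f) =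
      ofPowerSeriesRoot hQ (PowerSeries.expand b hb.ne' f) := by
  have hQ' : (Q : ℚ) ≠ 0 := by positivity
  have hb' : (b : ℚ) ≠ 0 := by positivity
  ext e
  rw [coeff_mahlerHahn]
  by_cases he : ∃ n : ℕ, e = n / Q
  · obtain ⟨n, rfl⟩ := he
    rw [coeff_ofPowerSeriesRoot_natCast_div, PowerSeries.coeff_expand]
    split_ifs with hdvd
    · obtain ⟨m, rfl⟩ := hdvd
      rw [Nat.mul_div_cancel_left m hb, ← coeff_ofPowerSeriesRoot_natCast_div hQ]
      congr 1
      push_cast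
      field_simp
    · refine coeff_ofPowerSeriesRoot_eq_zero hQ f fun m hm => hdvd ⟨m, ?_⟩
      field_simp at hm
      exact_mod_cast hm
  · push Not at he
    rw [coeff_ofPowerSeriesRoot_eq_zero hQ _ he, coeff_ofPowerSeriesRoot_eq_zero hQ]
    intro m hm
    exact he (b * m) (by push_cast; rw [← div_mul_cancel₀ e hb', hm]; ring)

theorem mahlerHahn_single_mul_ofPowerSeriesRoot_eq_mul {b : ℕ} (hb : 0 < b) {α β : ℚ}
    (hαβ : b * β = α + β) {U V : PowerSeries L} (hUV : PowerSeries.expand b hb.ne' V = U * V) :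
    mahlerHahn L b hb (single β 1 * ofPowerSeriesRoot hQ V) =
      (single α 1 * ofPowerSeriesRoot hQ U) * (single β 1 * ofPowerSeriesRoot hQ V) := by
  have hsingle : single (α + β) (1 : L) = single α 1 * single β 1 := by
    rw [single_mul_single, mul_one]
  rw [map_mul, mahlerHahn_single, mahlerHahn_ofPowerSeriesRoot, hUV, hαβ, hsingle, map_mul]
  ring

end RootField

theorem exists_intCast_div_of_dvd {e : ℚ} {q Q : ℕ} (he : ∃ m : ℤ, e = m / q)
    (hqQ : q ∣ Q) (hQ : Q ≠ 0) : ∃ m : ℤ, e = m / Q := by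
  obtain ⟨m, rfl⟩ := he
  obtain ⟨r, rfl⟩ := hqQ
  have hr : (r : ℚ) ≠ 0 := by exact_mod_cast right_ne_zero_of_mul hQ
  exact ⟨m * r, by push_cast; rw [mul_div_mul_right _ _ hr]⟩

theorem exists_add_natCast_div_of_le {Q : ℕ} {a e : ℚ} (ha : ∃ m : ℤ, a = m / Q)
    (he : ∃ m : ℤ, e = m / Q) (hae : a ≤ e) : ∃ n : ℕ, e = a + n / Q := by
  obtain ⟨k, rfl⟩ := ha
  obtain ⟨m, rfl⟩ := he
  obtain rfl | hQ := Q.eq_zero_or_pos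
  · exact ⟨0, by simp⟩
  have hkm : k ≤ m := by exact_mod_cast (div_le_div_iff_of_pos_right (by positivity)).mp hae
  refine ⟨(m - k).toNat, ?_⟩
  have hmk : ((m - k).toNat : ℚ) = m - k := by
    exact_mod_cast Int.toNat_of_nonneg (sub_nonneg.mpr hkm)
  rw [← add_div, hmk, add_sub_cancel]

section Existence

variable {L : Type*} [Field L] {b : ℕ} {u : HahnSeries ℚ L}

theorem exists_isPuiseux_mahlerHahn_eq_mul (hb : 1 < b) (hu : IsPuiseux u)
    (hlc : u.leadingCoeff = 1)
    (hβ : ∃ m : ℤ, ∃ q : ℕ, 0 < q ∧ u.order / ((b : ℚ) - 1) = m / q) :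
    ∃ v : HahnSeries ℚ L, IsPuiseux v ∧ mahlerHahn L b (by omega) v = u * v ∧
      v.coeff (u.order / (b - 1)) = 1 := by
  obtain ⟨q, hq, hsupp⟩ := hu
  obtain ⟨m, q', hq', hβ⟩ := hβ
  have hQ : 0 < q * q' := Nat.mul_pos hq hq'
  have hα : u.order ∈ u.support := by
    rw [mem_support, ← leadingCoeff_eq, hlc]
    exact one_ne_zero
  have hsupp' (e : ℚ) (he : e ∈ u.support) : ∃ n : ℕ, e = u.order + n / (q * q' : ℕ) :=
    exists_add_natCast_div_of_le
      (exists_intCast_div_of_dvd (hsupp _ hα) (dvd_mul_right q q') hQ.ne')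
      (exists_intCast_div_of_dvd (hsupp e he) (dvd_mul_right q q') hQ.ne')
      (order_le_of_coeff_ne_zero he)
  set U := PowerSeries.mk fun n => u.coeff (u.order + n / (q * q' : ℕ))
  have hu : u = single u.order 1 * ofPowerSeriesRoot hQ U :=
    eq_single_mul_ofPowerSeriesRoot hQ hsupp'
  have hU : PowerSeries.constantCoeff U = 1 := by
    simp [U, ← leadingCoeff_eq, hlc]
  obtain ⟨V, hV0, hV⟩ := PowerSeries.exists_expand_eq_mul hb hU
  obtain ⟨M, hM⟩ := exists_intCast_div_of_dvd ⟨m, hβ⟩ (dvd_mul_left q' q) hQ.ne'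
  have hb1 : (b : ℚ) - 1 ≠ 0 := sub_ne_zero.mpr (by exact_mod_cast hb.ne')
  have horder : b * (u.order / (b - 1)) = u.order + u.order / (b - 1) := by
    field_simp
    ring
  refine ⟨single (u.order / (b - 1)) 1 * ofPowerSeriesRoot hQ V,
    hM ▸ isPuiseux_single_mul_ofPowerSeriesRoot hQ M V, ?_, ?_⟩
  · rw [mahlerHahn_single_mul_ofPowerSeriesRoot_eq_mul hQ _ horder hV, ← hu]
  · rw [coeff_single_mul, sub_self, one_mul]
    simpa [hV0] using coeff_ofPowerSeriesRoot_natCast_div hQ V 0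

end Existence

/-- Let `b ≥ 2` and `u` a nonzero Puiseux series over a field `L` of
characteristic zero, with valuation `α = u.order` and leading coefficient `λ`.  If
`λ ≠ 1`, then `M v = u·v` has no nonzero Puiseux series solution `v`.  If `λ = 1` (and
`α/(b−1)` is an admissible exponent, automatic here), then there is a unique Puiseux
series solution `v` with valuation `α/(b−1)` and leading coefficient `1`, and the full
solution space of `M v = u·v` among Puiseux series is the one-dimensional `L`-span
of `v`. -/
theorem first_order_mahler_puiseux_solutions
    {L : Type*} [Field L] (b : ℕ) (hb : 2 ≤ b)
    (u : HahnSeries ℚ L) (hpu : IsPuiseux u) :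
    (u.leadingCoeff ≠ 1 →
      ∀ v : HahnSeries ℚ L, IsPuiseux v →
        mahlerHahn L b (by omega) v = u * v → v = 0) ∧
    (u.leadingCoeff = 1 →
      (∃ m : ℤ, ∃ q : ℕ, 0 < q ∧ u.order / ((b : ℚ) - 1) = (m : ℚ) / q) →
      ∃ v : HahnSeries ℚ L, IsPuiseux v ∧
        mahlerHahn L b (by omega) v = u * v ∧
        v.order = u.order / ((b : ℚ) - 1) ∧ v.leadingCoeff = 1 ∧
        (∀ w : HahnSeries ℚ L, IsPuiseux w →
          mahlerHahn L b (by omega) w = u * w →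
          w.order = u.order / ((b : ℚ) - 1) → w.leadingCoeff = 1 → w = v) ∧
        (∀ w : HahnSeries ℚ L, IsPuiseux w →
          mahlerHahn L b (by omega) w = u * w → ∃ c : L, w = c • v)) := by
  refine ⟨fun hlc v _ hv => ?_, fun hlc hβ => ?_⟩
  · by_contra hv0
    exact hlc (leadingCoeff_eq_one_of_mahlerHahn_eq_mul _ hv0 hv)
  obtain ⟨v, hvP, hv, hv1⟩ := exists_isPuiseux_mahlerHahn_eq_mul hb hpu hlc hβ
  have hv0 : v ≠ 0 := by
    rintro rfl
    simp at hv1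
  have hvo := order_eq_div_of_mahlerHahn_eq_mul hb hv0 hv
  refine ⟨v, hvP, hv, hvo, by rw [leadingCoeff_eq, hvo, hv1], fun w _ hw hwo hwl => ?_,
    fun w _ hw => ⟨_, eq_coeff_smul_of_mahlerHahn_eq_mul hb hv hv1 hw⟩⟩
  rw [eq_coeff_smul_of_mahlerHahn_eq_mul hb hv hv1 hw, ← hwo, ← leadingCoeff_eq, hwl, one_smul]
end

section
/- Let D be a difference ring extension of a difference field F with common constant field L, and suppose D is simple. Let y₀, y₁, …, y_N be nonzero F-hypergeometric elements of D lying in pairwise distinct F-similarity classes. Then y₀, y₁, …, y_N are linearly independent over L. -/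
/-- Let `D` be a simple difference ring extension of a difference field
`F` with common constant field `L` (constants of `D` are exactly the images of constants
of `F`).  If `y₀, …, y_N` are nonzero `F`-hypergeometric elements of `D` lying in pairwise
distinct `F`-similarity classes, then they are linearly independent over `L`: any linear
relation `∑ φ(c i) · y i = 0` with constant coefficients `c i` forces all `c i = 0`. -/
theorem pairwise_nonsimilar_hypergeometric_linearIndependent
    {F D : Type*} [Field F] [CommRing D]
    (σF : F →+* F) (φ : F →+* D) (σ : D ≃+* D)
    (hcompat : ∀ a : F, σ (φ a) = φ (σF a))
    (hconst : ∀ d : D, σ d = d → ∃ c : F, σF c = c ∧ d = φ c)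
    (hsimple : ∀ I : Ideal D, (∀ x ∈ I, σ x ∈ I) → I = ⊥ ∨ I = ⊤)
    (N : ℕ) (y : Fin (N + 1) → D) (u : Fin (N + 1) → F)
    (hy : ∀ i, y i ≠ 0)
    (hhyp : ∀ i, σ (y i) = φ (u i) * y i)
    (hdist : ∀ i j, i ≠ j → ∀ q : F, y i ≠ φ q * y j)
    (c : Fin (N + 1) → F) (hc : ∀ i, σF (c i) = c i)
    (hrel : ∑ i, φ (c i) * y i = 0) :
    ∀ i, c i = 0 := by
  classical
  have hD : Nontrivial D := ⟨y 0, 0, hy 0⟩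
  have hφ : Function.Injective φ := φ.injective
  -- every y i is invertible, by simplicity
  have hinv : ∀ i, ∃ v, y i * v = 1 := by
    intro i
    have hstab : ∀ x ∈ Ideal.span {y i}, σ x ∈ Ideal.span {y i} := by
      intro x hx
      rw [Ideal.mem_span_singleton'] at hx ⊢
      obtain ⟨d, rfl⟩ := hx
      exact ⟨σ d * φ (u i), by rw [map_mul, hhyp i]; ring⟩
    have hspan : Ideal.span {y i} = ⊤ := by
      rcases hsimple (Ideal.span {y i}) hstab with h | h
      · exact absurd (Ideal.span_singleton_eq_bot.mp h) (hy i)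
      · exact h
    rw [Ideal.span_singleton_eq_top] at hspan
    obtain ⟨w, hw⟩ := hspan.exists_right_inv
    exact ⟨w, hw⟩
  -- linear independence even over F, by strong induction on the support size
  suffices H : ∀ n (a : Fin (N + 1) → F),
      (Finset.univ.filter (fun k => a k ≠ 0)).card = n →
      (∑ k, φ (a k) * y k = 0) → ∀ i, a i = 0 by
    exact H _ c rfl hrel
  intro n
  induction n using Nat.strong_induction_on with
  | _ n IH =>
    intro a hcard hrel0 i
    by_contra hai
    obtain ⟨v, hv⟩ := hinv i
    by_cases hex : ∃ j, j ≠ i ∧ a j ≠ 0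
    · obtain ⟨j, hji, haj⟩ := hex
      set a' : Fin (N + 1) → F := fun k => a k / a i with ha'
      have hrel' : ∑ k, φ (a' k) * y k = 0 := by
        have : ∑ k, φ (a' k) * y k = φ (a i)⁻¹ * ∑ k, φ (a k) * y k := by
          rw [Finset.mul_sum]
          refine Finset.sum_congr rfl fun k _ => ?_
          rw [ha']
          simp only [div_eq_mul_inv, map_mul]
          ring
        rw [this, hrel0, mul_zero]
      set b : Fin (N + 1) → F := fun k => σF (a' k) * u k - a' k * u i with hb
      have hrelb : ∑ k, φ (b k) * y k = 0 := by
        have h1 : ∑ k, σ (φ (a' k) * y k) = 0 := by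
          rw [← map_sum σ, hrel', map_zero]
        calc ∑ k, φ (b k) * y k
            = ∑ k, (σ (φ (a' k) * y k) - φ (u i) * (φ (a' k) * y k)) := by
              refine Finset.sum_congr rfl fun k _ => ?_
              rw [hb]
              simp only [map_sub, map_mul, hcompat, hhyp]
              ring
          _ = 0 := by
              rw [Finset.sum_sub_distrib, h1, ← Finset.mul_sum, hrel', mul_zero,
                sub_zero]
      have hbzero : ∀ k, b k = 0 := by
        refine IH _ ?_ b rfl hrelb
        have hi_mem : i ∈ Finset.univ.filter (fun k => a k ≠ 0) := by
          simp [hai]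
        have hsub : Finset.univ.filter (fun k => b k ≠ 0) ⊆
            (Finset.univ.filter (fun k => a k ≠ 0)).erase i := by
          intro k hk
          simp only [Finset.mem_filter, Finset.mem_univ, true_and] at hk
          rw [Finset.mem_erase]
          constructor
          · rintro rfl
            apply hk
            rw [hb, ha']
            simp [div_self hai]
          · simp only [Finset.mem_filter, Finset.mem_univ, true_and]
            intro hak
            apply hk
            rw [hb, ha']
            simp [hak]
        calc (Finset.univ.filter (fun k => b k ≠ 0)).card
            ≤ ((Finset.univ.filter (fun k => a k ≠ 0)).erase i).card :=
              Finset.card_le_card hsub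
          _ < (Finset.univ.filter (fun k => a k ≠ 0)).card :=
              Finset.card_erase_lt_of_mem hi_mem
          _ = n := hcard
      have hbj : σF (a' j) * u j = a' j * u i := by
        have hbj0 := hbzero j
        rw [hb] at hbj0
        simpa [sub_eq_zero] using hbj0
      have key : φ (u i) * σ v = v := by
        have h1 : y i * (φ (u i) * σ v) = 1 := by
          have h2 : σ (y i * v) = 1 := by rw [hv, map_one]
          rw [map_mul, hhyp i] at h2
          linear_combination h2
        calc φ (u i) * σ v = (φ (u i) * σ v) * (y i * v) := by rw [hv, mul_one]
          _ = (y i * (φ (u i) * σ v)) * v := by ring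
          _ = v := by rw [h1, one_mul]
      have hz : σ (φ (a' j) * y j * v) = φ (a' j) * y j * v := by
        rw [map_mul, map_mul, hcompat, hhyp j]
        calc φ (σF (a' j)) * (φ (u j) * y j) * σ v
            = φ (σF (a' j) * u j) * y j * σ v := by rw [map_mul]; ring
          _ = φ (a' j * u i) * y j * σ v := by rw [hbj]
          _ = φ (a' j) * y j * (φ (u i) * σ v) := by rw [map_mul]; ring
          _ = φ (a' j) * y j * v := by rw [key]
      obtain ⟨q, hqc, hq⟩ := hconst _ hz
      have hyj : φ (a' j) * y j = φ q * y i := by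
        calc φ (a' j) * y j = φ (a' j) * y j * (v * y i) := by
              rw [mul_comm v, hv, mul_one]
          _ = (φ (a' j) * y j * v) * y i := by ring
          _ = φ q * y i := by rw [← hq]
      have ha'j : a' j ≠ 0 := div_ne_zero haj hai
      apply hdist j i hji (q / a' j)
      calc y j = φ ((a' j)⁻¹ * a' j) * y j := by
            rw [inv_mul_cancel₀ ha'j, map_one, one_mul]
        _ = φ (a' j)⁻¹ * (φ (a' j) * y j) := by rw [map_mul]; ring
        _ = φ (a' j)⁻¹ * (φ q * y i) := by rw [hyj]
        _ = φ (q / a' j) * y i := by rw [div_eq_mul_inv, map_mul]; ring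
    · push_neg at hex
      have hone : φ (a i) * y i = 0 := by
        have hs : ∑ k, φ (a k) * y k = φ (a i) * y i :=
          Finset.sum_eq_single i
            (fun j _ hj => by rw [hex j hj, map_zero, zero_mul])
            (fun h => absurd (Finset.mem_univ i) h)
        rw [← hs, hrel0]
      have hzero : φ (a i) = 0 := by
        calc φ (a i) = φ (a i) * (y i * v) := by rw [hv, mul_one]
          _ = (φ (a i) * y i) * v := by ring
          _ = 0 := by rw [hone, zero_mul]
      exact hai (hφ (by rw [hzero, map_zero]))
end

section
/- Let b ≥ 2 and consider the Riccati Mahler equation ℓ_r·u·Mu⋯M^{r−1}u + ⋯ + ℓ_2·u·Mu + ℓ_1·u + ℓ_0 = 0, where ℓ_0, …, ℓ_r are polynomials over an algebraically closed field of characteristic zero with ℓ_0 ℓ_r ≠ 0, and where M f(x) = f(x^b). Suppose u = P/Q is a rational solution with P, Q coprime polynomials. Then M^{r−1}Q divides ℓ_r · ∏_{i=0}^{r−2} M^i P, and consequently b^{r−1}·deg Q ≤ deg ℓ_r + ((b^{r−1}−1)/(b−1))·deg P. -/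
/-!
Multiplying the equation by `∏_{j<r} M^j Q` gives a polynomial identity in which every term
except `ℓ_r ∏_{j<r} M^j P` contains the factor `M^{r-1} Q`. As `M^{r-1} Q` is coprime to
`M^{r-1} P`, it divides `ℓ_r ∏_{j<r-1} M^j P`; the bound compares degrees, using
`deg M^j f = b^j deg f` and `P ≠ 0` (which holds because `ℓ_0 ≠ 0`).
-/

open Polynomial

/-- The Mahler substitution endomorphism `p(x) ↦ p(x^b)` on polynomials. -/
noncomputable def mahlerPoly {K : Type*} [Field K] (b : ℕ) (p : K[X]) : K[X] :=
  p.comp (X ^ b)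

open Finset

theorem mahlerPoly_iterate_apply {K : Type*} [Field K] (b n : ℕ) (p : K[X]) :
    (mahlerPoly b)^[n] p = expand K (b ^ n) p := by
  rw [expand_pow]
  rfl

section RiccatiNumerator

variable {R : Type*} [CommRing R]

/-- The numerator of `∑_{i ≤ n} ℓ i * ∏_{j < i} p j / q j` over the denominator `∏_{j < n} q j`. -/
def riccatiNumerator (ℓ p q : ℕ → R) (n : ℕ) : R :=
  ∑ i ∈ range (n + 1), ℓ i * (∏ j ∈ range i, p j) * ∏ j ∈ Ico i n, q j

theorem map_riccatiNumerator {S : Type*} [CommRing S] (f : R →+* S) (ℓ p q : ℕ → R) (n : ℕ) :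
    f (riccatiNumerator ℓ p q n) =
      riccatiNumerator (fun i => f (ℓ i)) (fun j => f (p j)) (fun j => f (q j)) n := by
  simp [riccatiNumerator, map_sum, map_prod]

theorem sum_prod_div_mul_prod_eq_riccatiNumerator {F : Type*} [Field F] (ℓ p q : ℕ → F)
    (n : ℕ) (hq : ∀ j < n, q j ≠ 0) :
    (∑ i ∈ range (n + 1), ℓ i * ∏ j ∈ range i, p j / q j) * ∏ j ∈ range n, q j =
      riccatiNumerator ℓ p q n := by
  rw [riccatiNumerator, sum_mul]
  refine sum_congr rfl fun i hi => ?_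
  have hin : i ≤ n := Nat.lt_succ_iff.mp (mem_range.mp hi)
  have hqi : ∏ j ∈ range i, q j ≠ 0 :=
    prod_ne_zero_iff.mpr fun j hj => hq j ((mem_range.mp hj).trans_le hin)
  rw [← prod_range_mul_prod_Ico q hin, prod_div_distrib]
  field_simp

theorem dvd_of_riccatiNumerator_eq_zero {ℓ p q : ℕ → R} {n : ℕ}
    (h : riccatiNumerator ℓ p q (n + 1) = 0) (hcop : IsCoprime (p n) (q n)) :
    q n ∣ ℓ (n + 1) * ∏ j ∈ range n, p j := by
  rw [riccatiNumerator, sum_range_succ, Ico_self, prod_empty, mul_one, prod_range_succ,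
    ← mul_assoc] at h
  refine hcop.symm.dvd_of_dvd_mul_right ?_
  rw [eq_neg_of_add_eq_zero_right h, dvd_neg]
  refine dvd_sum fun i hi => dvd_mul_of_dvd_right (dvd_prod_of_mem q ?_) _
  exact mem_Ico.mpr ⟨Nat.lt_succ_iff.mp (mem_range.mp hi), n.lt_succ_self⟩

end RiccatiNumerator

theorem pow_mul_natDegree_le_of_dvd_mul_prod_expand {R : Type*} [CommRing R] [IsDomain R]
    {b n : ℕ} (hb : 0 < b) {ℓ P Q : R[X]} (hℓ : ℓ ≠ 0) (hP : P ≠ 0)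
    (h : expand R (b ^ n) Q ∣ ℓ * ∏ i ∈ range n, expand R (b ^ i) P) :
    b ^ n * Q.natDegree ≤ ℓ.natDegree + (∑ i ∈ range n, b ^ i) * P.natDegree := by
  have hP' : ∀ i ∈ range n, expand R (b ^ i) P ≠ 0 :=
    fun i _ => (expand_ne_zero (pow_pos hb i)).mpr hP
  have hprod := prod_ne_zero_iff.mpr hP'
  have hdeg := natDegree_le_of_dvd h (mul_ne_zero hℓ hprod)
  rw [natDegree_mul hℓ hprod, natDegree_prod _ _ hP', natDegree_expand] at hdeg
  simpa [natDegree_expand, sum_mul, mul_comm] using hdeg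

theorem riccati_denominator_divisibility_general {K : Type*} [Field K]
    (b r : ℕ) (hb : 2 ≤ b) (hr : 1 ≤ r)
    (ℓ : ℕ → K[X]) (h0 : ℓ 0 ≠ 0) (hrne : ℓ r ≠ 0)
    (P Q : K[X]) (hQ : Q ≠ 0) (hcop : IsCoprime P Q)
    (hsol : ∑ i ∈ Finset.range (r + 1),
        algebraMap K[X] (RatFunc K) (ℓ i) *
          ∏ j ∈ Finset.range i,
            (algebraMap K[X] (RatFunc K) ((mahlerPoly b)^[j] P) /
              algebraMap K[X] (RatFunc K) ((mahlerPoly b)^[j] Q)) = 0) :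
    ((mahlerPoly b)^[r - 1] Q ∣ ℓ r * ∏ i ∈ Finset.range (r - 1), (mahlerPoly b)^[i] P) ∧
      (b : ℚ) ^ (r - 1) * Q.natDegree ≤
        ((ℓ r).natDegree : ℚ) +
          (((b : ℚ) ^ (r - 1) - 1) / ((b : ℚ) - 1)) * P.natDegree := by
  obtain ⟨s, rfl⟩ : ∃ s, r = s + 1 := ⟨r - 1, by omega⟩
  simp only [Nat.add_sub_cancel, mahlerPoly_iterate_apply] at hsol ⊢
  have hb0 : 0 < b := by omega
  have hP : P ≠ 0 := by
    rintro rfl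
    exact h0 (by simpa [sum_range_succ'] using hsol)
  have hnum : riccatiNumerator ℓ (fun j => expand K (b ^ j) P) (fun j => expand K (b ^ j) Q)
      (s + 1) = 0 := by
    apply IsFractionRing.injective K[X] (RatFunc K)
    rw [map_riccatiNumerator, map_zero, ← sum_prod_div_mul_prod_eq_riccatiNumerator,
      hsol, zero_mul]
    intro j _
    simpa using (expand_ne_zero (pow_pos hb0 j)).mpr hQ
  have hdvd := dvd_of_riccatiNumerator_eq_zero hnum (hcop.map (expand K (b ^ s)).toRingHom)
  refine ⟨hdvd, ?_⟩
  have hb1 : (b : ℚ) ≠ 1 := by norm_cast; omega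
  rw [← geom_sum_eq hb1]
  exact_mod_cast pow_mul_natDegree_le_of_dvd_mul_prod_expand hb0 hrne hP hdvd

/-- Let `b ≥ 2` and consider the Riccati Mahler equation
`∑_{i=0}^{r} ℓ_i · ∏_{j=0}^{i−1} M^j u = 0` with `ℓ_0 ℓ_r ≠ 0` over an algebraically
closed field of characteristic zero, where `M f(x) = f(x^b)`.  If `u = P/Q` is a rational
solution with `P, Q` coprime, then `M^{r−1} Q` divides `ℓ_r · ∏_{i=0}^{r−2} M^i P`, and
consequently `b^{r−1}·deg Q ≤ deg ℓ_r + ((b^{r−1}−1)/(b−1))·deg P`. -/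
theorem riccati_denominator_divisibility {K : Type*} [Field K] [IsAlgClosed K] [CharZero K]
    (b r : ℕ) (hb : 2 ≤ b) (hr : 1 ≤ r)
    (ℓ : ℕ → K[X]) (h0 : ℓ 0 ≠ 0) (hrne : ℓ r ≠ 0)
    (P Q : K[X]) (hQ : Q ≠ 0) (hcop : IsCoprime P Q)
    (hsol : ∑ i ∈ Finset.range (r + 1),
        algebraMap K[X] (RatFunc K) (ℓ i) *
          ∏ j ∈ Finset.range i,
            (algebraMap K[X] (RatFunc K) ((mahlerPoly b)^[j] P) /
              algebraMap K[X] (RatFunc K) ((mahlerPoly b)^[j] Q)) = 0) :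
    ((mahlerPoly b)^[r - 1] Q ∣ ℓ r * ∏ i ∈ Finset.range (r - 1), (mahlerPoly b)^[i] P) ∧
      (b : ℚ) ^ (r - 1) * Q.natDegree ≤
        ((ℓ r).natDegree : ℚ) +
          (((b : ℚ) ^ (r - 1) - 1) / ((b : ℚ) - 1)) * P.natDegree :=
  riccati_denominator_divisibility_general b r hb hr ℓ h0 hrne P Q hQ hcop hsol
end

section
/- Let b ≥ 3 and r ≥ 1, and suppose the Riccati Mahler equation Σ_{i=0}^{r} ℓ_i ∏_{j=0}^{i−1} M^j u = 0 (with ℓ_0 ℓ_r ≠ 0, all ℓ_i of degree at most d, M f(x) = f(x^b)) has a rational solution u = P/Q in lowest terms. Then deg P ≤ 4d/b^{r−1} and deg Q ≤ 3d/b^{r−1}. -/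
open Polynomial

section Helpers

variable {K : Type*} [Field K]

lemma mahlerPoly_iter_natDegree (b : ℕ) (j : ℕ) (p : K[X]) :
    ((mahlerPoly b)^[j] p).natDegree = b ^ j * p.natDegree := by
  induction j generalizing p with
  | zero => simp
  | succ j ih =>
      rw [Function.iterate_succ_apply, ih]
      have : (mahlerPoly b p).natDegree = b * p.natDegree := by
        rw [mahlerPoly, natDegree_comp, natDegree_X_pow, mul_comm]
      rw [this, pow_succ]
      ring

lemma mahlerPoly_ne_zero {b : ℕ} (hb : b ≠ 0) {p : K[X]} (hp : p ≠ 0) :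
    mahlerPoly b p ≠ 0 := by
  have h : ((X : K[X]) ^ b).natDegree ≠ 0 := by simpa using hb
  have hl : (p.comp (X ^ b)).leadingCoeff = p.leadingCoeff := by
    rw [leadingCoeff_comp h, leadingCoeff_X_pow, one_pow, mul_one]
  intro h0
  apply hp
  rw [← leadingCoeff_eq_zero, ← hl]
  rw [mahlerPoly] at h0
  rw [h0, leadingCoeff_zero]

lemma mahlerPoly_iter_ne_zero {b : ℕ} (hb : b ≠ 0) (j : ℕ) {p : K[X]} (hp : p ≠ 0) :
    (mahlerPoly b)^[j] p ≠ 0 := by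
  induction j generalizing p with
  | zero => simpa
  | succ j ih =>
      rw [Function.iterate_succ_apply]
      exact ih (mahlerPoly_ne_zero hb hp)

lemma mahlerPoly_isCoprime {b : ℕ} {P Q : K[X]} (h : IsCoprime P Q) :
    IsCoprime (mahlerPoly b P) (mahlerPoly b Q) := by
  obtain ⟨a, c, hac⟩ := h
  refine ⟨mahlerPoly b a, mahlerPoly b c, ?_⟩
  simp only [mahlerPoly]
  rw [← mul_comp, ← mul_comp, ← add_comp, hac, one_comp]

lemma mahlerPoly_iter_isCoprime {b : ℕ} (j : ℕ) {P Q : K[X]} (h : IsCoprime P Q) :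
    IsCoprime ((mahlerPoly b)^[j] P) ((mahlerPoly b)^[j] Q) := by
  induction j generalizing P Q with
  | zero => simpa
  | succ j ih =>
      rw [Function.iterate_succ_apply, Function.iterate_succ_apply]
      exact ih (mahlerPoly_isCoprime h)

lemma mahlerPoly_iter_zero {b : ℕ} (j : ℕ) :
    (mahlerPoly b)^[j] (0 : K[X]) = 0 := by
  induction j with
  | zero => rfl
  | succ j ih => rw [Function.iterate_succ_apply', ih]; simp [mahlerPoly]

lemma geom_sum_bound {b : ℕ} (hb : 3 ≤ b) (n : ℕ) :
    2 * (∑ j ∈ Finset.range n, b ^ j) + 1 ≤ b ^ n := by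
  induction n with
  | zero => simp
  | succ n ih =>
      rw [Finset.sum_range_succ, pow_succ]
      have h3 : b ^ n * 3 ≤ b ^ n * b := Nat.mul_le_mul le_rfl hb
      omega

end Helpers

/-- Let `b ≥ 3`, `r ≥ 1`, and suppose the Riccati Mahler equation
`∑_{i=0}^{r} ℓ_i ∏_{j=0}^{i−1} M^j u = 0` (with `ℓ_0 ℓ_r ≠ 0`, all `ℓ_i` of degree at most
`d`, `M f(x) = f(x^b)`) has a rational solution `u = P/Q` in lowest terms.  Then
`deg P ≤ 4d/b^{r−1}` and `deg Q ≤ 3d/b^{r−1}`. -/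
theorem riccati_degree_bounds_of_radix_ge_three
    {K : Type*} [Field K] [IsAlgClosed K] [CharZero K]
    (b r d : ℕ) (hb : 3 ≤ b) (hr : 1 ≤ r)
    (ℓ : ℕ → K[X]) (h0 : ℓ 0 ≠ 0) (hrne : ℓ r ≠ 0)
    (hd : ∀ i ≤ r, (ℓ i).natDegree ≤ d)
    (P Q : K[X]) (hQ : Q ≠ 0) (hcop : IsCoprime P Q)
    (hsol : ∑ i ∈ Finset.range (r + 1),
        algebraMap K[X] (RatFunc K) (ℓ i) *
          ∏ j ∈ Finset.range i,
            (algebraMap K[X] (RatFunc K) ((mahlerPoly b)^[j] P) /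
              algebraMap K[X] (RatFunc K) ((mahlerPoly b)^[j] Q)) = 0) :
    (P.natDegree : ℚ) ≤ 4 * d / (b : ℚ) ^ (r - 1) ∧
      (Q.natDegree : ℚ) ≤ 3 * d / (b : ℚ) ^ (r - 1) := by
  classical
  obtain ⟨n, rfl⟩ : ∃ n, r = n + 1 := ⟨r - 1, (Nat.succ_pred_eq_of_pos hr).symm⟩
  have hb0 : b ≠ 0 := by omega
  set φ := algebraMap K[X] (RatFunc K) with hφdef
  have hφ : Function.Injective φ := RatFunc.algebraMap_injective K
  -- P ≠ 0
  have hP : P ≠ 0 := by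
    rintro rfl
    apply h0
    rw [Finset.sum_eq_single 0] at hsol
    · have : φ (ℓ 0) = 0 := by simpa using hsol
      exact hφ (by simpa using this)
    · intro i hi hine
      apply mul_eq_zero_of_right
      apply Finset.prod_eq_zero (Finset.mem_range.mpr (Nat.pos_of_ne_zero hine))
      rw [mahlerPoly_iter_zero, map_zero, zero_div]
    · simp
  -- notation
  set A : ℕ → K[X] := fun i => ∏ j ∈ Finset.range i, (mahlerPoly b)^[j] P with hAdef
  set Bq : ℕ → K[X] := fun i => ∏ j ∈ Finset.Ico i (n + 1), (mahlerPoly b)^[j] Q with hBdef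
  have hMPne : ∀ j, (mahlerPoly b)^[j] P ≠ 0 := fun j => mahlerPoly_iter_ne_zero hb0 j hP
  have hMQne : ∀ j, (mahlerPoly b)^[j] Q ≠ 0 := fun j => mahlerPoly_iter_ne_zero hb0 j hQ
  have hAne : ∀ i, A i ≠ 0 := fun i => Finset.prod_ne_zero_iff.mpr fun j _ => hMPne j
  -- the cleared-denominator polynomial identity
  have key : ∑ i ∈ Finset.range (n + 2), ℓ i * A i * Bq i = 0 := by
    apply hφ
    rw [map_sum, map_zero]
    have expand : ∀ i ∈ Finset.range (n + 2),
        φ (ℓ i * A i * Bq i) =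
          (φ (ℓ i) * ∏ j ∈ Finset.range i,
              (φ ((mahlerPoly b)^[j] P) / φ ((mahlerPoly b)^[j] Q)))
            * φ (∏ j ∈ Finset.range (n + 1), (mahlerPoly b)^[j] Q) := by
      intro i hi
      have hi' : i ≤ n + 1 := by
        have := Finset.mem_range.mp hi; omega
      have hsplit : ∏ j ∈ Finset.range (n + 1), φ ((mahlerPoly b)^[j] Q) =
          (∏ j ∈ Finset.range i, φ ((mahlerPoly b)^[j] Q)) *
            ∏ j ∈ Finset.Ico i (n + 1), φ ((mahlerPoly b)^[j] Q) := by
        rw [Finset.range_eq_Ico, ← Finset.prod_Ico_consecutive _ (Nat.zero_le i) hi',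
          ← Finset.range_eq_Ico]
      have hQprod : (∏ j ∈ Finset.range i, φ ((mahlerPoly b)^[j] Q)) ≠ 0 :=
        Finset.prod_ne_zero_iff.mpr fun j _ =>
          (map_ne_zero_iff φ hφ).mpr (hMQne j)
      rw [map_mul, map_mul, map_prod, map_prod, map_prod, Finset.prod_div_distrib, hsplit]
      field_simp
    rw [Finset.sum_congr rfl expand, ← Finset.sum_mul, hsol, zero_mul]
  -- rearrange: isolate top term
  have hBtop : Bq (n + 1) = 1 := by simp [hBdef]
  have hsum : ℓ (n + 1) * A (n + 1) = - ∑ i ∈ Finset.range (n + 1), ℓ i * A i * Bq i := by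
    have h := key
    rw [Finset.sum_range_succ, hBtop, mul_one] at h
    linear_combination h
  -- divisibility step
  have hdvd : (mahlerPoly b)^[n] Q ∣ ℓ (n + 1) * A n := by
    have h1 : (mahlerPoly b)^[n] Q ∣ ℓ (n + 1) * A (n + 1) := by
      rw [hsum, dvd_neg]
      apply Finset.dvd_sum
      intro i hi
      have hmem : n ∈ Finset.Ico i (n + 1) := by
        rw [Finset.mem_Ico]
        exact ⟨by have := Finset.mem_range.mp hi; omega, by omega⟩
      exact Dvd.dvd.mul_left (Finset.dvd_prod_of_mem _ hmem) _
    have hA : A (n + 1) = A n * (mahlerPoly b)^[n] P := Finset.prod_range_succ _ n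
    rw [hA, ← mul_assoc] at h1
    exact ((mahlerPoly_iter_isCoprime n hcop).symm).dvd_of_dvd_mul_right h1
  -- degree consequences
  have hAideg : ∀ i, (A i).natDegree = (∑ j ∈ Finset.range i, b ^ j) * P.natDegree := by
    intro i
    rw [hAdef]
    rw [natDegree_prod _ _ fun j _ => hMPne j]
    rw [Finset.sum_congr rfl fun j _ => mahlerPoly_iter_natDegree b j P, ← Finset.sum_mul]
  have hBideg : ∀ i, (Bq i).natDegree = (∑ j ∈ Finset.Ico i (n + 1), b ^ j) * Q.natDegree := by
    intro i
    rw [hBdef]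
    rw [natDegree_prod _ _ fun j _ => hMQne j]
    rw [Finset.sum_congr rfl fun j _ => mahlerPoly_iter_natDegree b j Q, ← Finset.sum_mul]
  set p := P.natDegree
  set q := Q.natDegree
  set s := ∑ j ∈ Finset.range n, b ^ j with hsdef
  -- inequality (1)
  have h1 : b ^ n * q ≤ d + s * p := by
    have hne : ℓ (n + 1) * A n ≠ 0 := mul_ne_zero hrne (hAne n)
    have hle := Polynomial.natDegree_le_of_dvd hdvd hne
    rw [mahlerPoly_iter_natDegree, natDegree_mul hrne (hAne n), hAideg] at hle
    exact hle.trans (Nat.add_le_add_right (hd _ le_rfl) _)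
  -- inequality (2)
  have h2 : q < p → p * b ^ n ≤ d + q * b ^ n := by
    intro hpq
    have hlow : (s + b ^ n) * p ≤ (ℓ (n + 1) * A (n + 1)).natDegree := by
      rw [natDegree_mul hrne (hAne _), hAideg, Finset.sum_range_succ, ← hsdef]
      omega
    have hup : (ℓ (n + 1) * A (n + 1)).natDegree ≤ d + s * p + b ^ n * q := by
      rw [hsum, natDegree_neg]
      apply Polynomial.natDegree_sum_le_of_forall_le
      intro i hi
      have hi' : i ≤ n := by have := Finset.mem_range.mp hi; omega
      have hub : (ℓ i * A i * Bq i).natDegree ≤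
          (ℓ i).natDegree + (A i).natDegree + (Bq i).natDegree :=
        (natDegree_mul_le).trans (Nat.add_le_add_right natDegree_mul_le _)
      rw [hAideg, hBideg] at hub
      have hsplit1 : ∑ j ∈ Finset.Ico i (n + 1), b ^ j
          = (∑ j ∈ Finset.Ico i n, b ^ j) + b ^ n := Finset.sum_Ico_succ_top hi' _
      have hsplit2 : s = (∑ j ∈ Finset.range i, b ^ j) + ∑ j ∈ Finset.Ico i n, b ^ j := by
        rw [hsdef, Finset.range_eq_Ico, ← Finset.sum_Ico_consecutive _ (Nat.zero_le i) hi',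
          ← Finset.range_eq_Ico]
      set a := ∑ j ∈ Finset.range i, b ^ j
      set t := ∑ j ∈ Finset.Ico i n, b ^ j
      have hdi : (ℓ i).natDegree ≤ d := hd i (by omega)
      have htq : t * q ≤ t * p := Nat.mul_le_mul le_rfl hpq.le
      calc (ℓ i * A i * Bq i).natDegree
          ≤ (ℓ i).natDegree + a * p + (∑ j ∈ Finset.Ico i (n + 1), b ^ j) * q := hub
        _ ≤ d + s * p + b ^ n * q := by
            rw [hsplit1, hsplit2, add_mul, add_mul]
            nlinarith
    have hcomb := hlow.trans hup
    nlinarith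
  -- final arithmetic
  have hgeom : 2 * s + 1 ≤ b ^ n := geom_sum_bound hb n
  have hmain : p * b ^ n ≤ 4 * d ∧ q * b ^ n ≤ 3 * d := by
    by_cases hpq : q < p
    · have h2' := h2 hpq
      have h3 : (2 * s + 1) * p ≤ b ^ n * p := Nat.mul_le_mul_right p hgeom
      constructor <;> nlinarith
    · push_neg at hpq
      have hsp : s * p ≤ s * q := Nat.mul_le_mul le_rfl hpq
      have h3 : (2 * s + 1) * q ≤ b ^ n * q := Nat.mul_le_mul_right q hgeom
      have hq2 : q * b ^ n ≤ 2 * d := by nlinarith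
      have hp2 : p * b ^ n ≤ q * b ^ n := Nat.mul_le_mul_right _ hpq
      constructor <;> omega
  have hBpos : (0 : ℚ) < (b : ℚ) ^ n := by positivity
  have hcast : (n + 1 - 1) = n := by omega
  rw [hcast]
  constructor
  · rw [le_div_iff₀ hBpos]
    have := hmain.1
    calc ((p : ℚ)) * (b : ℚ) ^ n = ((p * b ^ n : ℕ) : ℚ) := by push_cast; ring
      _ ≤ ((4 * d : ℕ) : ℚ) := Nat.cast_le.mpr this
      _ = 4 * (d : ℚ) := by push_cast; ring
  · rw [le_div_iff₀ hBpos]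
    have := hmain.2
    calc ((q : ℚ)) * (b : ℚ) ^ n = ((q * b ^ n : ℕ) : ℚ) := by push_cast; ring
      _ ≤ ((3 * d : ℕ) : ℚ) := Nat.cast_le.mpr this
      _ = 3 * (d : ℚ) := by push_cast; ring
end

section
/- Let b = 2, r ≥ 1, and suppose the Riccati Mahler equation Σ_{i=0}^{r} ℓ_i ∏_{j=0}^{i−1} M^j u = 0 (with ℓ_0 ℓ_r ≠ 0, all ℓ_i of degree at most d, M f(x) = f(x^2)) has a rational solution u = P/Q in lowest terms. Then deg P ≤ 2d and deg Q ≤ 2(1 − 1/2^r)·d. -/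
open Polynomial

section Aux
variable {K : Type*} [Field K]

lemma mahler_iter (p : K[X]) (j : ℕ) :
    (mahlerPoly (K := K) 2)^[j] p = p.comp (X ^ 2 ^ j) := by
  induction j with
  | zero => simp
  | succ n ih =>
    rw [Function.iterate_succ_apply', ih, mahlerPoly, comp_assoc, X_pow_comp, ← pow_mul]
    congr 2
    rw [pow_succ]; ring

lemma mahler_natDegree (p : K[X]) (j : ℕ) :
    ((mahlerPoly (K := K) 2)^[j] p).natDegree = 2 ^ j * p.natDegree := by
  rw [mahler_iter, natDegree_comp, natDegree_X_pow, mul_comm]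

lemma mahler_ne_zero {p : K[X]} (hp : p ≠ 0) (j : ℕ) :
    (mahlerPoly (K := K) 2)^[j] p ≠ 0 := by
  rw [mahler_iter]
  intro h
  have hq : ((X : K[X]) ^ 2 ^ j).natDegree ≠ 0 := by
    simpa [natDegree_X_pow] using pow_ne_zero j (two_ne_zero (α := ℕ))
  have hl := leadingCoeff_comp (p := p) hq
  rw [h, leadingCoeff_zero] at hl
  simp only [leadingCoeff_X_pow, one_pow, mul_one] at hl
  exact hp (leadingCoeff_eq_zero.mp hl.symm)

lemma mahler_coprime {P Q : K[X]} (h : IsCoprime P Q) (j : ℕ) :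
    IsCoprime ((mahlerPoly (K := K) 2)^[j] P) ((mahlerPoly (K := K) 2)^[j] Q) := by
  rw [mahler_iter, mahler_iter]
  exact h.map (eval₂RingHom (C : K →+* K[X]) (X ^ 2 ^ j))
end Aux

/-- Let `b = 2`, `r ≥ 1`, and suppose the Riccati Mahler equation
`∑_{i=0}^{r} ℓ_i ∏_{j=0}^{i−1} M^j u = 0` (with `ℓ_0 ℓ_r ≠ 0`, all `ℓ_i` of degree at most
`d`, `M f(x) = f(x²)`) has a rational solution `u = P/Q` in lowest terms.  Then
`deg P ≤ 2d` and `deg Q ≤ 2(1 − 1/2^r)·d`. -/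
theorem riccati_degree_bounds_of_radix_two
    {K : Type*} [Field K] [IsAlgClosed K] [CharZero K]
    (r d : ℕ) (hr : 1 ≤ r)
    (ℓ : ℕ → K[X]) (h0 : ℓ 0 ≠ 0) (hrne : ℓ r ≠ 0)
    (hd : ∀ i ≤ r, (ℓ i).natDegree ≤ d)
    (P Q : K[X]) (hQ : Q ≠ 0) (hcop : IsCoprime P Q)
    (hsol : ∑ i ∈ Finset.range (r + 1),
        algebraMap K[X] (RatFunc K) (ℓ i) *
          ∏ j ∈ Finset.range i,
            (algebraMap K[X] (RatFunc K) ((mahlerPoly 2)^[j] P) /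
              algebraMap K[X] (RatFunc K) ((mahlerPoly 2)^[j] Q)) = 0) :
    (P.natDegree : ℚ) ≤ 2 * d ∧
      (Q.natDegree : ℚ) ≤ 2 * (1 - 1 / 2 ^ r) * d := by
  obtain ⟨k, rfl⟩ : ∃ k, r = k + 1 := ⟨r - 1, by omega⟩
  -- P ≠ 0
  have hP : P ≠ 0 := by
    rintro rfl
    apply h0
    rw [Finset.sum_eq_single_of_mem 0 (by simp) ?side] at hsol
    · simpa using hsol
    case side =>
      intro i _ hi
      refine mul_eq_zero_of_right _ ?_
      refine Finset.prod_eq_zero (Finset.mem_range.mpr (Nat.pos_of_ne_zero hi)) ?_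
      simp
  have hMPne : ∀ j, (mahlerPoly (K := K) 2)^[j] P ≠ 0 := fun j => mahler_ne_zero hP j
  have hMQne : ∀ j, (mahlerPoly (K := K) 2)^[j] Q ≠ 0 := fun j => mahler_ne_zero hQ j
  have haQ : ∀ j, algebraMap K[X] (RatFunc K) ((mahlerPoly 2)^[j] Q) ≠ 0 :=
    fun j => RatFunc.algebraMap_ne_zero (hMQne j)
  -- the polynomial identity
  have hF : ∑ i ∈ Finset.range (k + 2),
      ℓ i * (∏ j ∈ Finset.range i, (mahlerPoly 2)^[j] P) *
        (∏ j ∈ Finset.Ico i (k + 1), (mahlerPoly 2)^[j] Q) = 0 := by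
    apply RatFunc.algebraMap_injective K
    rw [map_zero, map_sum]
    have key := congrArg
      (· * ∏ j ∈ Finset.range (k + 1), algebraMap K[X] (RatFunc K) ((mahlerPoly 2)^[j] Q))
      hsol
    simp only [zero_mul, Finset.sum_mul] at key
    rw [← key]
    apply Finset.sum_congr rfl
    intro i hi
    rw [Finset.mem_range] at hi
    have hik : i ≤ k + 1 := by omega
    rw [map_mul, map_mul, map_prod, map_prod]
    have hcancel : (∏ j ∈ Finset.range i,
          (algebraMap K[X] (RatFunc K) ((mahlerPoly 2)^[j] P) /
            algebraMap K[X] (RatFunc K) ((mahlerPoly 2)^[j] Q))) *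
        (∏ j ∈ Finset.range i, algebraMap K[X] (RatFunc K) ((mahlerPoly 2)^[j] Q)) =
        ∏ j ∈ Finset.range i, algebraMap K[X] (RatFunc K) ((mahlerPoly 2)^[j] P) := by
      rw [← Finset.prod_mul_distrib]
      exact Finset.prod_congr rfl fun j _ => div_mul_cancel₀ _ (haQ j)
    rw [show (∏ j ∈ Finset.range (k + 1), algebraMap K[X] (RatFunc K) ((mahlerPoly 2)^[j] Q)) =
        (∏ j ∈ Finset.range i, algebraMap K[X] (RatFunc K) ((mahlerPoly 2)^[j] Q)) *
          ∏ j ∈ Finset.Ico i (k + 1), algebraMap K[X] (RatFunc K) ((mahlerPoly 2)^[j] Q) from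
        (Finset.prod_range_mul_prod_Ico _ hik).symm, ← hcancel]
    ring
  -- geometric sum fact
  have hgeo : ∀ n : ℕ, (∑ j ∈ Finset.range n, 2 ^ j) + 1 = 2 ^ n := by
    intro n
    induction n with
    | zero => simp
    | succ m ih => rw [Finset.sum_range_succ, pow_succ]; omega
  -- the last term equals minus the rest
  have hlast : ℓ (k + 1) * (∏ j ∈ Finset.range (k + 1), (mahlerPoly 2)^[j] P) =
      -∑ i ∈ Finset.range (k + 1),
        ℓ i * (∏ j ∈ Finset.range i, (mahlerPoly 2)^[j] P) *
          (∏ j ∈ Finset.Ico i (k + 1), (mahlerPoly 2)^[j] Q) := by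
    rw [Finset.sum_range_succ] at hF
    have h1 : (Finset.Ico (k + 1) (k + 1) : Finset ℕ) = ∅ := Finset.Ico_self _
    rw [h1, Finset.prod_empty, mul_one] at hF
    exact eq_neg_of_add_eq_zero_right hF
  -- divisibility of the sum by MQ k
  have hdvdsum : (mahlerPoly (K := K) 2)^[k] Q ∣
      ∑ i ∈ Finset.range (k + 1),
        ℓ i * (∏ j ∈ Finset.range i, (mahlerPoly 2)^[j] P) *
          (∏ j ∈ Finset.Ico i (k + 1), (mahlerPoly 2)^[j] Q) := by
    refine Finset.dvd_sum fun i hi => dvd_mul_of_dvd_right ?_ _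
    refine Finset.dvd_prod_of_mem _ ?_
    rw [Finset.mem_range] at hi
    exact Finset.mem_Ico.mpr ⟨by omega, by omega⟩
  have hdvd2 : (mahlerPoly (K := K) 2)^[k] Q ∣
      (ℓ (k + 1) * ∏ j ∈ Finset.range k, (mahlerPoly 2)^[j] P) *
        (mahlerPoly (K := K) 2)^[k] P := by
    rw [mul_assoc, ← Finset.prod_range_succ, hlast]
    exact dvd_neg.mpr hdvdsum
  -- F1 : 2^k * deg Q ≤ d + (∑_{j<k} 2^j) * deg P
  have hcopk : IsCoprime ((mahlerPoly (K := K) 2)^[k] Q) ((mahlerPoly (K := K) 2)^[k] P) :=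
    (mahler_coprime hcop k).symm
  have hdvd3 : (mahlerPoly (K := K) 2)^[k] Q ∣
      ℓ (k + 1) * ∏ j ∈ Finset.range k, (mahlerPoly 2)^[j] P :=
    hcopk.dvd_of_dvd_mul_right hdvd2
  have hne3 : ℓ (k + 1) * (∏ j ∈ Finset.range k, (mahlerPoly 2)^[j] P) ≠ 0 :=
    mul_ne_zero hrne (Finset.prod_ne_zero_iff.mpr fun j _ => hMPne j)
  have hF1 : 2 ^ k * Q.natDegree ≤ d + (∑ j ∈ Finset.range k, 2 ^ j) * P.natDegree := by
    have h := Polynomial.natDegree_le_of_dvd hdvd3 hne3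
    rw [mahler_natDegree] at h
    refine h.trans ?_
    refine (Polynomial.natDegree_mul_le).trans (add_le_add (hd (k + 1) le_rfl) ?_)
    refine (Polynomial.natDegree_prod_le _ _).trans ?_
    rw [Finset.sum_mul]
    exact le_of_eq (Finset.sum_congr rfl fun j _ => mahler_natDegree P j)
  -- F2 : 2^k * deg P ≤ d + 2^k * deg Q   (given deg Q ≤ deg P)
  by_cases hpq : Q.natDegree ≤ P.natDegree
  case neg =>
    -- deg P < deg Q : then deg Q ≤ d
    have hQd : Q.natDegree ≤ d := by
      have h2 : (∑ j ∈ Finset.range k, 2 ^ j) * P.natDegree ≤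
          (∑ j ∈ Finset.range k, 2 ^ j) * Q.natDegree :=
        Nat.mul_le_mul_left _ (by omega)
      have h3 := hgeo k
      nlinarith [hF1, h2]
    have hPd : P.natDegree ≤ d := by omega
    constructor
    · have : (P.natDegree : ℚ) ≤ d := by exact_mod_cast hPd
      have : (0:ℚ) ≤ d := Nat.cast_nonneg d
      push_cast
      linarith
    · have hq : (Q.natDegree : ℚ) ≤ d := by exact_mod_cast hQd
      have hd0 : (0:ℚ) ≤ d := Nat.cast_nonneg d
      have h2k : (2:ℚ) ≤ 2 ^ (k + 1) := by
        calc (2:ℚ) = 2 ^ 1 := (pow_one 2).symm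
        _ ≤ 2 ^ (k + 1) := by
          apply pow_le_pow_right₀ (by norm_num)
          omega
      have hpos : (0:ℚ) < 2 ^ (k + 1) := by positivity
      have : (1:ℚ) / 2 ^ (k + 1) ≤ 1 / 2 := by
        apply one_div_le_one_div_of_le <;> linarith
      nlinarith
  case pos =>
    -- upper bound for the degree of the sum
    have hub : (∑ i ∈ Finset.range (k + 1),
        ℓ i * (∏ j ∈ Finset.range i, (mahlerPoly 2)^[j] P) *
          (∏ j ∈ Finset.Ico i (k + 1), (mahlerPoly 2)^[j] Q)).natDegree ≤
        d + (∑ j ∈ Finset.range k, 2 ^ j) * P.natDegree + 2 ^ k * Q.natDegree := by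
      refine Polynomial.natDegree_sum_le_of_forall_le _ _ fun i hi => ?_
      rw [Finset.mem_range] at hi
      have hik : i ≤ k := by omega
      have e1 : ∑ j ∈ Finset.range i, ((mahlerPoly (K := K) 2)^[j] P).natDegree =
          (∑ j ∈ Finset.range i, 2 ^ j) * P.natDegree := by
        rw [Finset.sum_mul]
        exact Finset.sum_congr rfl fun j _ => mahler_natDegree P j
      have e2 : ∑ j ∈ Finset.Ico i (k + 1), ((mahlerPoly (K := K) 2)^[j] Q).natDegree =
          (∑ j ∈ Finset.Ico i (k + 1), 2 ^ j) * Q.natDegree := by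
        rw [Finset.sum_mul]
        exact Finset.sum_congr rfl fun j _ => mahler_natDegree Q j
      refine (Polynomial.natDegree_mul_le).trans ?_
      refine le_trans (add_le_add
        (Polynomial.natDegree_mul_le.trans
          (add_le_add le_rfl ((Polynomial.natDegree_prod_le _ _).trans_eq e1)))
        ((Polynomial.natDegree_prod_le _ _).trans_eq e2)) ?_
      have hdle : (ℓ i).natDegree ≤ d := hd i (by omega)
      have hsplit1 : ∑ j ∈ Finset.Ico i (k + 1), 2 ^ j =
          (∑ j ∈ Finset.Ico i k, 2 ^ j) + 2 ^ k := Finset.sum_Ico_succ_top hik _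
      have hsplit2 : (∑ j ∈ Finset.range i, 2 ^ j) + ∑ j ∈ Finset.Ico i k, 2 ^ j =
          ∑ j ∈ Finset.range k, 2 ^ j := Finset.sum_range_add_sum_Ico _ hik
      have hBq : (∑ j ∈ Finset.Ico i k, 2 ^ j) * Q.natDegree ≤
          (∑ j ∈ Finset.Ico i k, 2 ^ j) * P.natDegree := Nat.mul_le_mul_left _ hpq
      rw [hsplit1, ← hsplit2, add_mul, add_mul]
      linarith
    -- lower bound for the degree of the last term
    have hlb : (∑ j ∈ Finset.range (k + 1), 2 ^ j) * P.natDegree ≤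
        (ℓ (k + 1) * ∏ j ∈ Finset.range (k + 1), (mahlerPoly 2)^[j] P).natDegree := by
      rw [Polynomial.natDegree_mul hrne (Finset.prod_ne_zero_iff.mpr fun j _ => hMPne j),
        Polynomial.natDegree_prod _ _ (fun j _ => hMPne j)]
      have e3 : ∑ j ∈ Finset.range (k + 1), ((mahlerPoly (K := K) 2)^[j] P).natDegree =
          (∑ j ∈ Finset.range (k + 1), 2 ^ j) * P.natDegree := by
        rw [Finset.sum_mul]
        exact Finset.sum_congr rfl fun j _ => mahler_natDegree P j
      rw [e3]
      exact Nat.le_add_left _ _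
    have hF2 : 2 ^ k * P.natDegree ≤ d + 2 ^ k * Q.natDegree := by
      have hub' : (ℓ (k + 1) * ∏ j ∈ Finset.range (k + 1), (mahlerPoly 2)^[j] P).natDegree ≤
          d + (∑ j ∈ Finset.range k, 2 ^ j) * P.natDegree + 2 ^ k * Q.natDegree := by
        rw [hlast, Polynomial.natDegree_neg]; exact hub
      have h := hlb.trans hub'
      rw [Finset.sum_range_succ, add_mul] at h
      linarith
    -- final rational arithmetic
    have hscast : ∑ j ∈ Finset.range k, (2 : ℚ) ^ j = 2 ^ k - 1 := by
      have h := congrArg (Nat.cast (R := ℚ)) (hgeo k)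
      push_cast at h
      linarith
    have hQ1 : (2 : ℚ) ^ k * Q.natDegree ≤ d + (2 ^ k - 1) * P.natDegree := by
      have h' : ((2 ^ k * Q.natDegree : ℕ) : ℚ) ≤
          ((d + (∑ j ∈ Finset.range k, 2 ^ j) * P.natDegree : ℕ) : ℚ) := by exact_mod_cast hF1
      push_cast at h'
      rw [hscast] at h'
      linarith
    have hQ2 : (2 : ℚ) ^ k * P.natDegree ≤ d + 2 ^ k * Q.natDegree := by
      have h' : ((2 ^ k * P.natDegree : ℕ) : ℚ) ≤
          ((d + 2 ^ k * Q.natDegree : ℕ) : ℚ) := by exact_mod_cast hF2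
      push_cast at h'
      exact h'
    have hk1 : (1 : ℚ) ≤ 2 ^ k := by
      exact_mod_cast Nat.one_le_two_pow (n := k)
    have h2k0 : (0 : ℚ) < 2 ^ k := by positivity
    have hp2d : (P.natDegree : ℚ) ≤ 2 * d := by linarith
    refine ⟨hp2d, ?_⟩
    rw [show (2 : ℚ) * (1 - 1 / 2 ^ (k + 1)) * d = ((2 * 2 ^ k - 1) * d) / 2 ^ k by
      field_simp; ring]
    rw [le_div_iff₀ h2k0]
    nlinarith [mul_le_mul_of_nonneg_left hp2d (by linarith : (0:ℚ) ≤ 2 ^ k - 1)]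
end

section
/- With the notation of the bounded Gosper–Petkovšek recursion (A_k, B_k, C_k) starting from coprime monic P, Q with G_k = gcd(A_k, M B_k), there exists k ≥ 1 such that for all i ≥ 0: A_{k+i} = A_k, B_{k+i} = M^i B_k, and C_{k+i} = M^i C_k; equivalently, G_{k+i} = 1 for all i ≥ 0. -/
open Polynomial

lemma mahlerPoly_one {K : Type*} [Field K] (b : ℕ) : mahlerPoly b (1 : K[X]) = 1 := by
  simp [mahlerPoly]

lemma mahlerPoly_iter_one {K : Type*} [Field K] (b j : ℕ) :
    (mahlerPoly b)^[j] (1 : K[X]) = 1 := by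
  induction j with
  | zero => rfl
  | succ n ih => rw [Function.iterate_succ_apply', ih, mahlerPoly_one]

/-- With the notation of the bounded Gosper–Petkovšek recursion
(0-indexed): `(A 0, B 0, C 0) = (P, Q, 1)` for coprime monic `P, Q`, and
`(A (n+1), B (n+1), C (n+1)) = (A n / G n, M (B n) / G n, M (C n) · ∏_{j=0}^{n} M^j (G n))`
with `G n = gcd (A n) (M (B n))` (monic gcd), there exists `k` such that for all `i ≥ 0`:
`A (k+i) = A k`, `B (k+i) = M^i (B k)`, and `C (k+i) = M^i (C k)`. -/
theorem bounded_gosper_petkovsek_stabilizes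
    {K : Type*} [Field K] [CharZero K] [DecidableEq K]
    (b : ℕ) (hb : 2 ≤ b)
    (P Q : K[X]) (hP : P.Monic) (hQ : Q.Monic) (hcop : IsCoprime P Q)
    (A B C : ℕ → K[X])
    (hA0 : A 0 = P) (hB0 : B 0 = Q) (hC0 : C 0 = 1)
    (hrec : ∀ n : ℕ,
      A (n + 1) * gcd (A n) (mahlerPoly b (B n)) = A n ∧
      B (n + 1) * gcd (A n) (mahlerPoly b (B n)) = mahlerPoly b (B n) ∧
      C (n + 1) = mahlerPoly b (C n) *
        ∏ j ∈ Finset.range (n + 1),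
          (mahlerPoly b)^[j] (gcd (A n) (mahlerPoly b (B n)))) :
    ∃ k : ℕ, ∀ i : ℕ,
      A (k + i) = A k ∧
      B (k + i) = (mahlerPoly b)^[i] (B k) ∧
      C (k + i) = (mahlerPoly b)^[i] (C k) := by
  -- A n ≠ 0 for all n
  have hAne : ∀ n, A n ≠ 0 := by
    intro n
    induction n with
    | zero => rw [hA0]; exact hP.ne_zero
    | succ m ih =>
      intro h
      apply ih
      rw [← (hrec m).1, h, zero_mul]
  have hGne : ∀ n, gcd (A n) (mahlerPoly b (B n)) ≠ 0 := by
    intro n h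
    exact hAne n ((gcd_eq_zero_iff _ _).mp h).1
  -- degree equation
  have hdeg : ∀ n, (A n).natDegree =
      (A (n+1)).natDegree + (gcd (A n) (mahlerPoly b (B n))).natDegree := by
    intro n
    conv_lhs => rw [← (hrec n).1]
    exact natDegree_mul (hAne (n+1)) (hGne n)
  have hmono : ∀ m n, m ≤ n → (A n).natDegree ≤ (A m).natDegree := by
    intro m n h
    induction n with
    | zero => have : m = 0 := by omega
              rw [this]
    | succ p ih =>
      rcases Nat.lt_or_ge m (p+1) with h' | h'
      · calc (A (p+1)).natDegree ≤ (A p).natDegree := by rw [hdeg p]; omega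
          _ ≤ (A m).natDegree := ih (by omega)
      · have : m = p + 1 := by omega
        rw [this]
  -- find k achieving the infimum of degrees
  set f : ℕ → ℕ := fun n => (A n).natDegree with hf
  have hmem : sInf (Set.range f) ∈ Set.range f :=
    Nat.sInf_mem (Set.range_nonempty f)
  obtain ⟨k, hk⟩ := hmem
  have hconst : ∀ n, k ≤ n → f n = f k := by
    intro n hn
    have h1 : f n ≤ f k := hmono k n hn
    have h2 : f k ≤ f n := hk ▸ Nat.sInf_le ⟨n, rfl⟩
    omega
  have hG1 : ∀ n, k ≤ n → gcd (A n) (mahlerPoly b (B n)) = 1 := by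
    intro n hn
    have h1 : f n = f k := hconst n hn
    have h2 : f (n+1) = f k := hconst (n+1) (by omega)
    have h3 : (gcd (A n) (mahlerPoly b (B n))).natDegree = 0 := by
      have := hdeg n
      simp only [hf] at h1 h2
      omega
    have hm : (gcd (A n) (mahlerPoly b (B n))).Monic := by
      have := Polynomial.monic_normalize (p := gcd (A n) (mahlerPoly b (B n))) (hGne n)
      rwa [normalize_gcd] at this
    exact hm.natDegree_eq_zero.mp h3
  refine ⟨k, ?_⟩
  intro i
  induction i with
  | zero => exact ⟨rfl, rfl, rfl⟩
  | succ m ih =>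
    obtain ⟨ha, hbB, hc⟩ := ih
    have hg := hG1 (k + m) (by omega)
    obtain ⟨r1, r2, r3⟩ := hrec (k + m)
    rw [hg, mul_one] at r1 r2
    have hprod : (∏ j ∈ Finset.range (k + m + 1),
        (mahlerPoly b)^[j] (gcd (A (k+m)) (mahlerPoly b (B (k+m))))) = 1 := by
      rw [hg]
      exact Finset.prod_eq_one fun j _ => mahlerPoly_iter_one b j
    rw [hprod, mul_one] at r3
    refine ⟨?_, ?_, ?_⟩
    · show A (k + m + 1) = A k
      rw [r1, ha]
    · show B (k + m + 1) = (mahlerPoly b)^[m + 1] (B k)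
      rw [r2, hbB, Function.iterate_succ_apply']
    · show C (k + m + 1) = (mahlerPoly b)^[m + 1] (C k)
      rw [r3, hc, Function.iterate_succ_apply']
end
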